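/- arXiv:1811.03753 — 2 statements merged into one kernel-verified Lean document; each statement's English description precedes it below -/
import Mathlib

section
/- For any ultrafilter D on V and any B ∈ D, the set I = {q ∈ Q_D : there is A ∈ 𝒜_q with A ⊆ B} is dense in Q_D (every p ∈ Q_D has an extension in I), and moreover for every q ∈ I and every r ∈ Q_D with q ≤ r, span(u_r \ u_q) ⊆ B ∪ {0}. -/
open Set

/-- `V = ⊕_{n<ω} 𝔽₂`, realized as finitely supported functions `ℕ →₀ 𝔽₂`. -/
abbrev V : Type := ℕ →₀ ZMod 2

/-- The convex hull (in `ω`) of a finite set of natural numbers. -/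
def hull (s : Finset ℕ) : Set ℕ := {k | ∃ a ∈ s, ∃ b ∈ s, a ≤ k ∧ k ≤ b}

/-- the translate `x + A` of a set `A ⊆ V`. -/
def vset (x : V) (A : Set V) : Set V := (fun a => x + a) '' A

/-- the span (as a set) of a finite set of vectors of `V`. -/
def spanOf (s : Finset V) : Set V := (Submodule.span (ZMod 2) (s : Set V) : Set V)

/-- A condition in the forcing `ℚ_D`: a pair `(u, 𝒜)` with `u ⊆ V` finite containing `0`,
the convex hulls of supports of distinct members of `u` disjoint, and `𝒜 ⊆ D` finite. -/
structure Cond (D : Ultrafilter V) where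
  u : Finset V
  A : Finset (Set V)
  zero_mem : (0 : V) ∈ u
  supp_disj : ∀ x ∈ u, ∀ y ∈ u, x ≠ y → Disjoint (hull x.support) (hull y.support)
  mem_D : ∀ B ∈ A, (B : Set V) ∈ D

/-- The order on `ℚ_D` from Definition 3. -/
def Cond.le {D : Ultrafilter V} (p q : Cond D) : Prop :=
  -- (B)(a)
  p.u ⊆ q.u ∧
  (∀ x ∈ p.u, ∀ y ∈ q.u \ p.u, ∀ i ∈ x.support, ∀ j ∈ y.support, i < j) ∧
  -- (B)(b)
  p.A ⊆ q.A ∧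
  -- (B)(c)
  (∀ A ∈ q.A, A ∉ p.A →
    (∀ B ∈ p.A, A ⊆ B) ∧
    (∀ B ∈ p.A, ∀ x ∈ spanOf p.u, vset x B ∈ D → A ⊆ vset x B)) ∧
  -- (B)(d)
  (∀ x ∈ spanOf p.u, ∀ y ∈ spanOf (q.u \ p.u), ∀ A ∈ p.A, vset x A ∈ D →
    y ∈ vset x A ∪ {0} ∧ vset (x + y) A ∈ D)

/-!
Density: given `p`, shrink `B` to `B ∩ ⋂ 𝒜_p ∩ ⋂ {x + C ∈ D : x ∈ span u_p, C ∈ 𝒜_p}`. This is a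
finite intersection of members of `D` (the span of a finite set over `𝔽₂` is finite), so it lies
in `D`, and adding it to `𝒜_p` without touching `u_p` gives an extension satisfying (c) by
construction and (d) vacuously.

Capture: clause (d) of `q ≤ r` with `x = 0` puts every nonzero `y ∈ span(u_r \ u_q)` into each
`A ∈ 𝒜_q`.
-/

lemma spanOf_finite (s : Finset V) : (spanOf s).Finite := by
  have : Module.Finite (ZMod 2) (Submodule.span (ZMod 2) (s : Set V)) :=
    Module.Finite.span_of_finite _ s.finite_toSet
  have : Finite (Submodule.span (ZMod 2) (s : Set V)) := Module.finite_of_finite (ZMod 2)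
  exact (Submodule.span (ZMod 2) (s : Set V) : Set V).toFinite

lemma zero_mem_spanOf (s : Finset V) : (0 : V) ∈ spanOf s :=
  (Submodule.span (ZMod 2) (s : Set V)).zero_mem

@[simp]
lemma spanOf_empty : spanOf (∅ : Finset V) = {0} := by
  simp [spanOf]

@[simp]
lemma vset_zero (A : Set V) : vset 0 A = A := by
  simp [vset]

namespace Cond

variable {D : Ultrafilter V}

/-- The sets a new member of `𝒜` must be contained in, by clause (c) of the order. -/
def constraints (p : Cond D) : Set (Set V) :=
  ↑p.A ∪ {C | ∃ x ∈ spanOf p.u, ∃ B ∈ p.A, C = vset x B ∧ C ∈ D}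

lemma constraints_finite (p : Cond D) : p.constraints.Finite := by
  refine p.A.finite_toSet.union
    ((Set.Finite.image2 vset (spanOf_finite p.u) p.A.finite_toSet).subset ?_)
  rintro C ⟨x, hx, B, hB, rfl, -⟩
  exact Set.mem_image2_of_mem hx hB

lemma constraints_subset (p : Cond D) : p.constraints ⊆ D.sets := by
  rintro C (hC | ⟨x, -, B, -, rfl, hCD⟩)
  exacts [p.mem_D C hC, hCD]

lemma sInter_constraints_mem (p : Cond D) : ⋂₀ p.constraints ∈ D :=
  (Filter.sInter_mem p.constraints_finite).2 p.constraints_subset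

noncomputable def insertSet (p : Cond D) (A : Set V) (hA : A ∈ D) : Cond D where
  u := p.u
  A := insert A p.A
  zero_mem := p.zero_mem
  supp_disj := p.supp_disj
  mem_D := by
    intro C hC
    rcases Finset.mem_insert.1 hC with rfl | hC
    exacts [hA, p.mem_D C hC]

lemma le_insertSet (p : Cond D) {A : Set V} (hA : A ∈ D) (hAc : A ⊆ ⋂₀ p.constraints) :
    p.le (p.insertSet A hA) := by
  refine ⟨subset_rfl, by simp [insertSet], Finset.subset_insert _ _, ?_, ?_⟩
  · intro C hC hCp
    obtain rfl : C = A := (Finset.mem_insert.1 hC).resolve_right hCp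
    refine ⟨fun B hB => hAc.trans (sInter_subset_of_mem (Or.inl hB)), ?_⟩
    exact fun B hB x hx hxD => hAc.trans (sInter_subset_of_mem (Or.inr ⟨x, hx, B, hB, rfl, hxD⟩))
  · intro x _ y hy C _ hxC
    have hy0 : y = 0 := by simpa [insertSet] using hy
    subst hy0
    exact ⟨Or.inr rfl, by rwa [add_zero]⟩

lemma exists_le_subset (p : Cond D) {B : Set V} (hB : B ∈ D) :
    ∃ q : Cond D, p.le q ∧ ∃ A ∈ q.A, A ⊆ B :=
  ⟨p.insertSet _ (Filter.inter_mem hB p.sInter_constraints_mem),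
    p.le_insertSet _ inter_subset_right, _, Finset.mem_insert_self _ _, inter_subset_left⟩

lemma spanOf_sdiff_subset {q r : Cond D} (hqr : q.le r) {A : Set V} (hA : A ∈ q.A) :
    spanOf (r.u \ q.u) ⊆ A ∪ {0} := by
  intro y hy
  have hAD : vset 0 A ∈ D := by simpa using q.mem_D A hA
  simpa using (hqr.2.2.2.2 0 (zero_mem_spanOf q.u) y hy A hA hAD).1

end Cond

/-- Observation 7: for `B ∈ D`, the set `I = {q ∈ ℚ_D : ∃ A ∈ 𝒜_q, A ⊆ B}` is dense in
`ℚ_D`, and for every `q ∈ I` and every `r ≥ q`, `span(u_r \ u_q) ⊆ B ∪ {0}`. -/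
theorem QD_dense_capture (D : Ultrafilter V) (B : Set V) (hB : B ∈ D) :
    (∀ p : Cond D, ∃ q : Cond D, p.le q ∧ ∃ A ∈ q.A, A ⊆ B) ∧
    (∀ q : Cond D, (∃ A ∈ q.A, A ⊆ B) →
      ∀ r : Cond D, q.le r → spanOf (r.u \ q.u) ⊆ B ∪ {0}) :=
  ⟨fun p => p.exists_le_subset hB, fun _ ⟨_, hA, hAB⟩ _ hqr =>
    (Cond.spanOf_sdiff_subset hqr hA).trans (union_subset_union_left _ hAB)⟩
end

section
/- Let 𝒜 be a family of subspaces of V and let 𝒟 be the set of nonprincipal ultrafilters on V that contain every subspace of V of finite codimension and contain V \ S[n] for every S ∈ 𝒜 and n < ω. If D₁, D₂ ∈ 𝒟, then D₁ ⊕ D₂ ∈ 𝒟, where D₁ ⊕ D₂ = {A ⊆ V : for D₁-almost all s₁, for D₂-almost all s₂, s₁+s₂ ∈ A} (the product/sum of ultrafilters on the additive group V). -/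
/-!
If `H` is an additive subgroup of `V` and `H ∈ D₁ ⊕ D₂`, then `D₁` concentrates on a single coset
`t + H`: two `s₁, t` that are both good for `H` share a witness `s₂`, so `s₁ - t ∈ H`. Now
`S[n]` is a subspace, and `t + S[n] ⊆ S[m]` as soon as `m ≥ n` and `x_m, x_{m+1}, …` lie outside
the support of `t`; hence `S[n] ∈ D₁ ⊕ D₂` would put `S[m]` in `D₁`, which is excluded. The other
two defining properties of `𝒟` pass to `D₁ ⊕ D₂` directly: subspaces are closed under addition,
and the translate of a singleton is a singleton.
-/

open Set

/-- The basis vectors `x_n` of `V`. -/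
noncomputable def xb (n : ℕ) : V := Finsupp.single n 1

/-- `S[n] = (⊕_{l<n} 𝔽₂ x_l) + S`. -/
def brack (S : Submodule (ZMod 2) V) (n : ℕ) : Set V :=
  {v | ∃ w ∈ Submodule.span (ZMod 2) {z : V | ∃ l < n, z = xb l}, ∃ s ∈ S, v = w + s}

/-- The sum `D₁ ⊕ D₂` of two ultrafilters on the additive group `V`:
`A ∈ D₁ ⊕ D₂` iff for `D₁`-almost all `s₁`, for `D₂`-almost all `s₂`, `s₁ + s₂ ∈ A`. -/
noncomputable def oplus (D₁ D₂ : Ultrafilter V) : Ultrafilter V :=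
  D₁.bind fun s₁ => D₂.map fun s₂ => s₁ + s₂

/-- The set `𝒟` of nonprincipal ultrafilters on `V` containing every subspace of finite
codimension and containing `V \ S[n]` for every `S ∈ 𝒜` and `n < ω`. -/
def scrD (𝒜 : Set (Submodule (ZMod 2) V)) : Set (Ultrafilter V) :=
  {D | (∀ v : V, ({v} : Set V) ∉ D) ∧
       (∀ W : Submodule (ZMod 2) V, Module.Finite (ZMod 2) (V ⧸ W) → (W : Set V) ∈ D) ∧
       (∀ S ∈ 𝒜, ∀ n : ℕ, Set.univ \ brack S n ∈ D)}

noncomputable def initialSpan (n : ℕ) : Submodule (ZMod 2) V :=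
  Submodule.span (ZMod 2) {z : V | ∃ l < n, z = xb l}

lemma initialSpan_mono {n m : ℕ} (h : n ≤ m) : initialSpan n ≤ initialSpan m :=
  Submodule.span_mono fun _ ⟨l, hl, hz⟩ => ⟨l, hl.trans_le h, hz⟩

lemma exists_mem_initialSpan (v : V) : ∃ m, v ∈ initialSpan m := by
  obtain ⟨m, hm⟩ := Finset.exists_nat_subset_range v.support
  refine ⟨m, ?_⟩
  have hv : v ∈ Finsupp.supported (ZMod 2) (ZMod 2) (Iio m) :=
    (Finsupp.mem_supported _ v).2 fun l hl => Finset.mem_range.1 (hm hl)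
  rw [Finsupp.supported_eq_span_single] at hv
  exact Submodule.span_mono (by rintro _ ⟨l, hl, rfl⟩; exact ⟨l, hl, rfl⟩) hv

lemma brack_eq_sup (S : Submodule (ZMod 2) V) (n : ℕ) :
    brack S n = ↑(initialSpan n ⊔ S) := by
  ext v
  simp only [brack, initialSpan, mem_ofPred_eq, SetLike.mem_coe, Submodule.mem_sup, eq_comm]

lemma oplus_mem_iff (D₁ D₂ : Ultrafilter V) (A : Set V) :
    A ∈ oplus D₁ D₂ ↔ {s₁ : V | {s₂ : V | s₁ + s₂ ∈ A} ∈ D₂} ∈ D₁ := by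
  show A ∈ Filter.bind ↑D₁ (fun s₁ => ↑(D₂.map fun s₂ => s₁ + s₂)) ↔ _
  rw [Filter.mem_bind']
  rfl

section oplus

variable {D₁ D₂ : Ultrafilter V}

lemma singleton_notMem_oplus (h₂ : ∀ v : V, ({v} : Set V) ∉ D₂) (v : V) :
    ({v} : Set V) ∉ oplus D₁ D₂ := by
  have hempty : {s₁ : V | {s₂ : V | s₁ + s₂ ∈ ({v} : Set V)} ∈ D₂} = ∅ :=
    eq_empty_of_forall_notMem fun s₁ hs₁ => h₂ (-s₁ + v) <| by
      rwa [← preimage_add_left_singleton]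
  rw [oplus_mem_iff, hempty]
  exact Ultrafilter.empty_notMem

lemma coe_mem_oplus_of_mem_of_mem (H : AddSubmonoid V) (h₁ : (H : Set V) ∈ D₁)
    (h₂ : (H : Set V) ∈ D₂) : (H : Set V) ∈ oplus D₁ D₂ :=
  (oplus_mem_iff D₁ D₂ _).2 <| Filter.mem_of_superset h₁ fun _ hs₁ =>
    Filter.mem_of_superset h₂ fun _ hs₂ => H.add_mem hs₁ hs₂

lemma exists_sub_mem_of_coe_mem_oplus (H : AddSubgroup V) (h : (H : Set V) ∈ oplus D₁ D₂) :
    ∃ t : V, {s : V | s - t ∈ H} ∈ D₁ := by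
  rw [oplus_mem_iff] at h
  obtain ⟨t, ht⟩ := Ultrafilter.nonempty_of_mem h
  refine ⟨t, Filter.mem_of_superset h fun s hs => ?_⟩
  obtain ⟨s₂, hss₂, hts₂⟩ := Ultrafilter.nonempty_of_mem (Filter.inter_mem hs ht)
  show s - t ∈ H
  simpa only [add_sub_add_right_eq_sub] using H.sub_mem hss₂ hts₂

lemma compl_brack_mem_oplus {S : Submodule (ZMod 2) V}
    (h₁ : ∀ m : ℕ, univ \ brack S m ∈ D₁) (n : ℕ) : univ \ brack S n ∈ oplus D₁ D₂ := by
  rw [← compl_eq_univ_sdiff, Ultrafilter.compl_mem_iff_notMem, brack_eq_sup]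
  intro h
  obtain ⟨t, ht⟩ := exists_sub_mem_of_coe_mem_oplus (initialSpan n ⊔ S).toAddSubgroup h
  obtain ⟨m, hm⟩ := exists_mem_initialSpan t
  have hn : initialSpan n ⊔ S ≤ initialSpan (max m n) ⊔ S :=
    sup_le_sup_right (initialSpan_mono (le_max_right m n)) S
  have hcoset : {s : V | s - t ∈ initialSpan n ⊔ S} ⊆ brack S (max m n) := fun s hs => by
    have ht' : t ∈ initialSpan (max m n) ⊔ S :=
      Submodule.mem_sup_left (initialSpan_mono (le_max_left m n) hm)
    rw [brack_eq_sup, SetLike.mem_coe, ← sub_add_cancel s t]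
    exact add_mem (hn hs) ht'
  have hmem := Filter.inter_mem (Filter.mem_of_superset ht hcoset) (h₁ (max m n))
  rw [inter_sdiff_self] at hmem
  exact Ultrafilter.empty_notMem hmem

end oplus

/-- Subclaim 2: `𝒟` is closed under the operation `⊕` on ultrafilters,
where `A ∈ D₁ ⊕ D₂ ↔ {s₁ : {s₂ : s₁ + s₂ ∈ A} ∈ D₂} ∈ D₁`. -/
theorem scrD_closed_under_oplus (𝒜 : Set (Submodule (ZMod 2) V))
    (D₁ D₂ : Ultrafilter V) (h₁ : D₁ ∈ scrD 𝒜) (h₂ : D₂ ∈ scrD 𝒜) :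
    (∀ A : Set V, A ∈ oplus D₁ D₂ ↔ {s₁ : V | {s₂ : V | s₁ + s₂ ∈ A} ∈ D₂} ∈ D₁) ∧
    oplus D₁ D₂ ∈ scrD 𝒜 :=
  ⟨oplus_mem_iff D₁ D₂, singleton_notMem_oplus h₂.1,
    fun W hW => coe_mem_oplus_of_mem_of_mem W.toAddSubmonoid (h₁.2.1 W hW) (h₂.2.1 W hW),
    fun S hS => compl_brack_mem_oplus (h₁.2.2 S hS)⟩
end
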